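/- Let Γ be a commutative thick weakly distance-regular digraph in which the configuration C(q) exists, i.e. p^{(1,q-2)}_{(1,q-1),(1,q-1)} ≠ 0 and (1,q-2) is pure. Then any shortest directed path between distinct vertices of Γ contains at most two arcs of type (1,q-1). -/

import Mathlib

/-!
Common framework: commutative thick weakly distance-regular digraphs.
-/

variable {V : Type*}

/-- There is a directed walk of length `n` from `x` to `y`. -/
def HasWalk (adj : V → V → Prop) (x y : V) (n : ℕ) : Prop :=
  ∃ f : ℕ → V, f 0 = x ∧ f n = y ∧ ∀ i < n, adj (f i) (f (i + 1))

/-- Directed distance `∂(x,y)`. -/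
noncomputable def ddist (adj : V → V → Prop) (x y : V) : ℕ :=
  sInf {n | HasWalk adj x y n}

/-- Two-way distance `∂̃(x,y) = (∂(x,y), ∂(y,x))`. -/
noncomputable def tdist (adj : V → V → Prop) (x y : V) : ℕ × ℕ :=
  (ddist adj x y, ddist adj y x)

/-- The pair `i` is an attained two-way distance, i.e. `i ∈ ∂̃(Γ)`. -/
def Attained (adj : V → V → Prop) (i : ℕ × ℕ) : Prop :=
  ∃ x y : V, tdist adj x y = i

/-- Intersection number `p^h_{i,j}`: for attained `h` it is the common cardinality of
`{z | ∂̃(x,z) = i, ∂̃(z,y) = j}` over pairs with `∂̃(x,y) = h` (and `0` otherwise). -/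
noncomputable def pnum (adj : V → V → Prop) (h i j : ℕ × ℕ) : ℕ :=
  sSup {n | ∃ x y : V, tdist adj x y = h ∧
    n = Set.ncard {z : V | tdist adj x z = i ∧ tdist adj z y = j}}

/-- Valency `k_i = |Γ_i(x)|`. -/
noncomputable def kval (adj : V → V → Prop) (i : ℕ × ℕ) : ℕ :=
  pnum adj (0, 0) i i.swap

/-- Adjacency of the subdigraph `Δ_J`: arcs of type `(1, t-1)` for `t ∈ J`. -/
def deltaAdj (adj : V → V → Prop) (J : Set ℕ) (u v : V) : Prop :=
  ∃ t ∈ J, tdist adj u v = (1, t - 1)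

/-- A circuit of length `s`. -/
def IsCircuit (adj : V → V → Prop) (s : ℕ) (f : ℕ → V) : Prop :=
  0 < s ∧ f s = f 0 ∧ ∀ i < s, adj (f i) (f (i + 1))

/-- Strongly connected. -/
def IsStrong (adj : V → V → Prop) : Prop :=
  ∀ x y : V, ∃ n, HasWalk adj x y n

/-- Weakly distance-regular: the intersection numbers are well defined. -/
def IsWDR (adj : V → V → Prop) : Prop :=
  ∀ (i j : ℕ × ℕ) (x y x' y' : V), tdist adj x y = tdist adj x' y' →
    Set.ncard {z : V | tdist adj x z = i ∧ tdist adj z y = j}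
      = Set.ncard {z : V | tdist adj x' z = i ∧ tdist adj z y' = j}

/-- Thick: `p^h_{i,i}, p^h_{i,i*} ∈ {0, k_i}`. -/
def IsThick (adj : V → V → Prop) : Prop :=
  ∀ h i : ℕ × ℕ,
    (pnum adj h i i = 0 ∨ pnum adj h i i = kval adj i) ∧
    (pnum adj h i i.swap = 0 ∨ pnum adj h i i.swap = kval adj i)

/-- A thick weakly distance-regular digraph (as a property of an adjacency relation). -/
def IsWDRThick (adj : V → V → Prop) : Prop :=
  IsStrong adj ∧ IsWDR adj ∧ IsThick adj

/-- A commutative thick weakly distance-regular digraph. -/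
structure CTWDR (V : Type*) [Fintype V] where
  adj : V → V → Prop
  loopless : ∀ v, ¬ adj v v
  strong : IsStrong adj
  wdr : IsWDR adj
  comm : ∀ (i j : ℕ × ℕ) (x y : V),
    Set.ncard {z : V | tdist adj x z = i ∧ tdist adj z y = j}
      = Set.ncard {z : V | tdist adj x z = j ∧ tdist adj z y = i}
  thick : IsThick adj

namespace CTWDR

variable {V : Type*} [Fintype V] (G : CTWDR V)

/-- Product `EF` of two sets of relations (relations identified with two-way distances). -/
def prodS (E F : Set (ℕ × ℕ)) : Set (ℕ × ℕ) :=
  {h | ∃ i ∈ E, ∃ j ∈ F, pnum G.adj h i j ≠ 0}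

/-- Powers `Γ_i^l` (with `Γ_i^0 = {Γ_{(0,0)}}` and `Γ_i^1 = {Γ_i}`). -/
def pow (i : ℕ × ℕ) : ℕ → Set (ℕ × ℕ)
  | 0 => {(0, 0)}
  | 1 => {i}
  | n + 2 => G.prodS (pow i (n + 1)) {i}

/-- The pair `(1, s-1)` is pure: every circuit of length `s` containing an arc of type
`(1, s-1)` consists of arcs of type `(1, s-1)`. -/
def Pure (s : ℕ) : Prop :=
  ∀ f : ℕ → V, IsCircuit G.adj s f →
    (∃ i < s, tdist G.adj (f i) (f (i + 1)) = (1, s - 1)) →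
    ∀ i < s, tdist G.adj (f i) (f (i + 1)) = (1, s - 1)

/-- `(1, s-1)` is mixed. -/
def Mixed (s : ℕ) : Prop := ¬ G.Pure s

/-- Configuration `C(q)` exists. -/
def Cexists (q : ℕ) : Prop :=
  pnum G.adj (1, q - 2) (1, q - 1) (1, q - 1) ≠ 0 ∧ G.Pure (q - 1)

/-- Configuration `D(q)` exists. -/
def Dexists (q : ℕ) : Prop :=
  pnum G.adj (1, q - 1) (1, q - 2) (q - 2, 1) ≠ 0 ∧ G.Pure (q - 1)

/-- A closed set of relations: `Γ_{i*}Γ_j ⊆ F` for all `i, j ∈ F`. -/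
def Closed (F : Set (ℕ × ℕ)) : Prop :=
  ∀ i ∈ F, ∀ j ∈ F, G.prodS {i.swap} {j} ⊆ F

/-- The minimal closed set `⟨F⟩` containing `F`. -/
def genClosed (F : Set (ℕ × ℕ)) : Set (ℕ × ℕ) :=
  ⋂₀ {C | F ⊆ C ∧ G.Closed C}

/-- The block `F_J(x)` of the closed set generated by `{Γ_{1,t-1}}_{t ∈ J}`. -/
def block (J : Set ℕ) (x : V) : Set V :=
  {y | tdist G.adj x y ∈ G.genClosed {i | ∃ t ∈ J, i = (1, t - 1)}}

end CTWDR

/-!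
Write `A = (1, q-1)` and `B = (1, q-2)`. Since `p^B_{A,A} ≠ 0`, every vertex `u` has a
`B`-out-neighbour `t` joined to `u` by an `A`-`A` path. Thickness turns the nonvanishing of
`p^h_{i,i}` into "every `i`-out-neighbour of `x` is an `i`-in-neighbour of `y`", so every
`A`-out-neighbour `v` of `u` has `∂̃(v, t) = A`, and then every `A`-`A` path `v → w → z` has
`∂̃(t, z) = A`: three consecutive arcs of type `A` are shortcut by the two arcs `u → t → z`.
Commutativity slides an arc of type `A` to the front of any walk without changing its length, so
any three arcs of type `A` on a walk can be made consecutive, and a walk carrying three of them is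
never shortest.
-/

theorem Set.exists_lt_lt_of_two_lt_ncard {α : Type*} [LinearOrder α] {s : Set α} (hs : s.Finite)
    (h : 2 < s.ncard) : ∃ a ∈ s, ∃ b ∈ s, ∃ c ∈ s, a < b ∧ b < c := by
  rw [Set.ncard_eq_toFinset_card s hs] at h
  let e := hs.toFinset.orderEmbOfFin rfl
  have he : ∀ i, e i ∈ s := fun i => hs.mem_toFinset.1 (Finset.orderEmbOfFin_mem _ _ i)
  exact ⟨e ⟨0, by omega⟩, he _, e ⟨1, by omega⟩, he _, e ⟨2, h⟩, he _,
    e.lt_iff_lt.2 (by simp [Fin.lt_def]), e.lt_iff_lt.2 (by simp [Fin.lt_def])⟩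

section Walks

variable {V : Type*} {adj : V → V → Prop}

theorem hasWalk_zero_iff {x y : V} : HasWalk adj x y 0 ↔ x = y := by
  constructor
  · rintro ⟨f, rfl, rfl, -⟩
    rfl
  · rintro rfl
    exact ⟨fun _ => x, rfl, rfl, fun i hi => absurd hi (Nat.not_lt_zero i)⟩

theorem hasWalk_succ_iff {x y : V} {n : ℕ} :
    HasWalk adj x y (n + 1) ↔ ∃ w, adj x w ∧ HasWalk adj w y n := by
  constructor
  · rintro ⟨f, rfl, rfl, hf⟩
    exact ⟨f 1, hf 0 n.succ_pos, fun t => f (t + 1), rfl, rfl,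
      fun i hi => hf (i + 1) (by omega)⟩
  · rintro ⟨w, hxw, f, rfl, rfl, hf⟩
    refine ⟨fun t => if t = 0 then x else f (t - 1), rfl, by simp, ?_⟩
    rintro (_ | i) hi
    · simpa using hxw
    · simpa using hf i (by omega)

theorem HasWalk.append {x y z : V} {m k : ℕ} (h₁ : HasWalk adj x y m)
    (h₂ : HasWalk adj y z k) : HasWalk adj x z (m + k) := by
  induction m generalizing x with
  | zero =>
    rw [hasWalk_zero_iff.1 h₁, zero_add]
    exact h₂
  | succ m ih =>
    obtain ⟨w, hxw, hwy⟩ := hasWalk_succ_iff.1 h₁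
    rw [Nat.add_right_comm]
    exact hasWalk_succ_iff.2 ⟨w, hxw, ih hwy⟩

theorem hasWalk_of_path {f : ℕ → V} {n : ℕ} (hf : ∀ i < n, adj (f i) (f (i + 1)))
    {i j : ℕ} (hij : i ≤ j) (hjn : j ≤ n) : HasWalk adj (f i) (f j) (j - i) :=
  ⟨fun t => f (i + t), rfl, congrArg f (Nat.add_sub_cancel' hij),
    fun t _ => hf (i + t) (by omega)⟩

theorem ddist_le_of_hasWalk {x y : V} {n : ℕ} (h : HasWalk adj x y n) : ddist adj x y ≤ n :=
  Nat.sInf_le h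

theorem hasWalk_ddist (hs : IsStrong adj) (x y : V) : HasWalk adj x y (ddist adj x y) :=
  Nat.sInf_mem (hs x y)

theorem ddist_self (x : V) : ddist adj x x = 0 :=
  Nat.sInf_eq_zero.2 (Or.inl (hasWalk_zero_iff.2 rfl))

theorem tdist_self (x : V) : tdist adj x x = (0, 0) :=
  Prod.ext (ddist_self x) (ddist_self x)

theorem adj_iff_ddist_eq_one (hs : IsStrong adj) (hloop : ∀ v, ¬ adj v v) {x y : V} :
    adj x y ↔ ddist adj x y = 1 := by
  constructor
  · intro h
    have hle : ddist adj x y ≤ 1 :=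
      ddist_le_of_hasWalk (hasWalk_succ_iff.2 ⟨y, h, hasWalk_zero_iff.2 rfl⟩)
    have hne : ddist adj x y ≠ 0 := by
      intro h0
      obtain rfl := hasWalk_zero_iff.1 (h0 ▸ hasWalk_ddist hs x y)
      exact hloop x h
    omega
  · intro h
    obtain ⟨w, hxw, hwy⟩ := hasWalk_succ_iff.1 (h ▸ hasWalk_ddist hs x y)
    rwa [← hasWalk_zero_iff.1 hwy]

end Walks

section WeaklyDistanceRegular

variable {V : Type*} {adj : V → V → Prop}

theorem pnum_tdist (hwdr : IsWDR adj) (x y : V) (i j : ℕ × ℕ) :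
    pnum adj (tdist adj x y) i j = {z | tdist adj x z = i ∧ tdist adj z y = j}.ncard := by
  refine IsGreatest.csSup_eq ⟨⟨x, y, rfl, rfl⟩, ?_⟩
  rintro m ⟨x', y', he, rfl⟩
  rw [hwdr i j x' y' x y he]

theorem kval_eq_ncard (hwdr : IsWDR adj) (x : V) (i : ℕ × ℕ) :
    kval adj i = {z | tdist adj x z = i}.ncard := by
  rw [kval, ← tdist_self x, pnum_tdist hwdr]
  congr 1
  ext z
  exact and_iff_left_of_imp fun hz => congrArg Prod.swap hz

variable [Finite V]

theorem exists_of_tdist_eq (hwdr : IsWDR adj) {x y x' y' : V}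
    (he : tdist adj x y = tdist adj x' y') {i j : ℕ × ℕ}
    (h : ∃ z, tdist adj x' z = i ∧ tdist adj z y' = j) :
    ∃ z, tdist adj x z = i ∧ tdist adj z y = j := by
  obtain ⟨z, hz⟩ := h
  have hcard := Set.ncard_ne_zero_of_mem (s := {z | tdist adj x' z = i ∧ tdist adj z y' = j}) hz
  rw [← hwdr i j x y x' y' he] at hcard
  exact Set.nonempty_of_ncard_ne_zero hcard

theorem exists_triangle_of_pnum_ne_zero (hwdr : IsWDR adj) {h i j : ℕ × ℕ}
    (hp : pnum adj h i j ≠ 0) (u : V) :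
    ∃ t w, tdist adj u t = h ∧ tdist adj u w = i ∧ tdist adj w t = j := by
  obtain ⟨x, y, rfl⟩ : ∃ x y, tdist adj x y = h := by
    by_contra hna
    push Not at hna
    simp [pnum, hna] at hp
  obtain ⟨t, hut, -⟩ := exists_of_tdist_eq hwdr (x := u) (y := u) (x' := x) (y' := x)
    ((tdist_self u).trans (tdist_self x).symm) ⟨y, rfl, rfl⟩
  rw [pnum_tdist hwdr] at hp
  obtain ⟨w, huw, hwt⟩ := exists_of_tdist_eq hwdr hut (Set.nonempty_of_ncard_ne_zero hp)
  exact ⟨t, w, hut, huw, hwt⟩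

end WeaklyDistanceRegular

namespace CTWDR

variable {V : Type*} [Fintype V] (G : CTWDR V)

theorem adj_iff_tdist_fst_eq_one {u v : V} : G.adj u v ↔ (tdist G.adj u v).1 = 1 :=
  adj_iff_ddist_eq_one G.strong G.loopless

theorem tdist_eq_of_thick {i : ℕ × ℕ} {x y v w : V} (hxw : tdist G.adj x w = i)
    (hwy : tdist G.adj w y = i) (hxv : tdist G.adj x v = i) : tdist G.adj v y = i := by
  have hk : pnum G.adj (tdist G.adj x y) i i = kval G.adj i := by
    refine (G.thick _ i).1.resolve_left ?_
    rw [pnum_tdist G.wdr]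
    exact Set.ncard_ne_zero_of_mem (a := w) ⟨hxw, hwy⟩
  rw [pnum_tdist G.wdr, kval_eq_ncard G.wdr x] at hk
  have hall := Set.eq_of_subset_of_ncard_le (fun z hz => hz.1) hk.ge
  have hv : v ∈ {z | tdist G.adj x z = i} := hxv
  rw [← hall] at hv
  exact hv.2

theorem exists_tdist_swap {i j : ℕ × ℕ} {x w y : V} (hxw : tdist G.adj x w = i)
    (hwy : tdist G.adj w y = j) : ∃ z, tdist G.adj x z = j ∧ tdist G.adj z y = i := by
  have hcard := Set.ncard_ne_zero_of_mem
    (s := {z | tdist G.adj x z = i ∧ tdist G.adj z y = j}) ⟨hxw, hwy⟩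
  rw [G.comm] at hcard
  exact Set.nonempty_of_ncard_ne_zero hcard

theorem exists_tdist_hasWalk {i : ℕ × ℕ} {x w y : V} {m : ℕ} (hxw : HasWalk G.adj x w m)
    (hwy : tdist G.adj w y = i) : ∃ v, tdist G.adj x v = i ∧ HasWalk G.adj v y m := by
  induction m generalizing x with
  | zero =>
    obtain rfl := hasWalk_zero_iff.1 hxw
    exact ⟨y, hwy, hasWalk_zero_iff.2 rfl⟩
  | succ m ih =>
    obtain ⟨x', hxx', hx'w⟩ := hasWalk_succ_iff.1 hxw
    obtain ⟨v', hx'v', hv'y⟩ := ih hx'w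
    obtain ⟨v, hxv, hvv'⟩ := G.exists_tdist_swap rfl hx'v'
    refine ⟨v, hxv, hasWalk_succ_iff.2 ⟨v', ?_, hv'y⟩⟩
    rw [G.adj_iff_tdist_fst_eq_one, hvv', ← G.adj_iff_tdist_fst_eq_one]
    exact hxx'

theorem hasWalk_two_of_three_arcs {h i : ℕ × ℕ} (hh : h.1 = 1) (hi : i.1 = 1)
    (hp : pnum G.adj h i i ≠ 0) {u v w z : V} (huv : tdist G.adj u v = i)
    (hvw : tdist G.adj v w = i) (hwz : tdist G.adj w z = i) : HasWalk G.adj u z 2 := by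
  obtain ⟨t, w', hut, huw', hw't⟩ := exists_triangle_of_pnum_ne_zero G.wdr hp u
  have hvt : tdist G.adj v t = i := G.tdist_eq_of_thick huw' hw't huv
  have htz : tdist G.adj t z = i := G.tdist_eq_of_thick hvw hwz hvt
  have hadj_ut : G.adj u t := by rw [G.adj_iff_tdist_fst_eq_one, hut, hh]
  have hadj_tz : G.adj t z := by rw [G.adj_iff_tdist_fst_eq_one, htz, hi]
  exact hasWalk_succ_iff.2
    ⟨t, hadj_ut, hasWalk_succ_iff.2 ⟨z, hadj_tz, hasWalk_zero_iff.2 rfl⟩⟩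

theorem hasWalk_of_three_arcs {h i : ℕ × ℕ} (hh : h.1 = 1) (hi : i.1 = 1)
    (hp : pnum G.adj h i i ≠ 0) {u v w w' w'' z : V} {l l' : ℕ} (huv : tdist G.adj u v = i)
    (hvw : HasWalk G.adj v w l) (hww' : tdist G.adj w w' = i)
    (hw'w'' : HasWalk G.adj w' w'' l') (hw''z : tdist G.adj w'' z = i) :
    HasWalk G.adj u z (2 + (l + l')) := by
  obtain ⟨v₁, hvv₁, hv₁w'⟩ := G.exists_tdist_hasWalk hvw hww'
  obtain ⟨v₂, hv₁v₂, hv₂z⟩ := G.exists_tdist_hasWalk (hv₁w'.append hw'w'') hw''z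
  exact (G.hasWalk_two_of_three_arcs hh hi hp huv hvv₁ hv₁v₂).append hv₂z

end CTWDR

theorem stmt2_general {V : Type*} [Fintype V] (G : CTWDR V) (q : ℕ) (hC : G.Cexists q)
    (x y : V) (f : ℕ → V) (n : ℕ)
    (hf0 : f 0 = x) (hfn : f n = y) (harc : ∀ i < n, G.adj (f i) (f (i + 1)))
    (hshort : n = ddist G.adj x y) :
    {i | i < n ∧ tdist G.adj (f i) (f (i + 1)) = (1, q - 1)}.ncard ≤ 2 := by
  by_contra hmany
  obtain ⟨a, ⟨-, ha⟩, b, ⟨-, hb⟩, c, ⟨hcn, hc⟩, hab, hbc⟩ :=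
    Set.exists_lt_lt_of_two_lt_ncard ((Set.finite_Iio n).subset fun i hi => hi.1)
      (not_le.1 hmany)
  subst hf0 hfn
  have hwalk := ((hasWalk_of_path harc (Nat.zero_le a) (by omega : a ≤ n)).append
    (G.hasWalk_of_three_arcs rfl rfl hC.1 ha
      (hasWalk_of_path harc (by omega : a + 1 ≤ b) (by omega : b ≤ n)) hb
      (hasWalk_of_path harc (by omega : b + 1 ≤ c) (by omega : c ≤ n)) hc)).append
    (hasWalk_of_path harc (by omega : c + 1 ≤ n) le_rfl)
  have hle := ddist_le_of_hasWalk hwalk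
  omega

/-- Lemma 2.3: if `C(q)` exists, any shortest path between distinct
vertices contains at most two arcs of type `(1, q-1)`. -/
theorem stmt2 {V : Type*} [Fintype V] (G : CTWDR V) (q : ℕ) (hC : G.Cexists q)
    (x y : V) (hxy : x ≠ y) (f : ℕ → V) (n : ℕ)
    (hf0 : f 0 = x) (hfn : f n = y) (harc : ∀ i < n, G.adj (f i) (f (i + 1)))
    (hshort : n = ddist G.adj x y) :
    {i | i < n ∧ tdist G.adj (f i) (f (i + 1)) = (1, q - 1)}.ncard ≤ 2 :=
  stmt2_general G q hC x y f n hf0 hfn harc hshort
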